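/- Let n ≥ 3 and let P be a complete map of order n. If τ is an automorphism of P (a permutation of X_n commuting with α and β and satisfying τ∘P∘τ⁻¹ = P) that fixes some quadricell x ∈ X_n, then τ is the identity. Consequently, every orbit of the automorphism group Aut(P) on X_n has cardinality |Aut(P)|, and for every automorphism τ of P every ⟨τ⟩-orbit on X_n has length equal to the order of τ (every automorphism of a complete map acts semi-regularly on X_n). -/

import Mathlib

/-- The quadricells of the complete graph `K_n`: pairs `((i,j),ε)` with `i ≠ j`. -/
abbrev Quadricells (n : ℕ) := {x : (Fin n × Fin n) × Bool // x.1.1 ≠ x.1.2}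

/-- Negation as a permutation of `Bool`. -/
def boolNeg : Equiv.Perm Bool :=
  ⟨Bool.not, Bool.not, fun b => by cases b <;> rfl, fun b => by cases b <;> rfl⟩

/-- The involution `α ((i,j),ε) = ((i,j), ¬ε)`. -/
def mapAlpha (n : ℕ) : Equiv.Perm (Quadricells n) :=
  Equiv.Perm.subtypePerm (Equiv.prodCongr (Equiv.refl (Fin n × Fin n)) boolNeg)
    (fun _ => Iff.rfl)

/-- The involution `β ((i,j),ε) = ((j,i), ε)`. -/
def mapBeta (n : ℕ) : Equiv.Perm (Quadricells n) :=
  Equiv.Perm.subtypePerm (Equiv.prodCongr (Equiv.prodComm (Fin n) (Fin n)) (Equiv.refl Bool))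
    (fun _ => ne_comm)

/-- The extended action of `g ∈ S_n` on quadricells: `g* ((i,j),ε) = ((g i, g j), ε)`. -/
def gStar {n : ℕ} (g : Equiv.Perm (Fin n)) : Equiv.Perm (Quadricells n) :=
  Equiv.Perm.subtypePerm (Equiv.prodCongr (Equiv.prodCongr g g) (Equiv.refl Bool))
    (fun x => (g.injective.ne_iff : g x.1.1 ≠ g x.1.2 ↔ _))

/-- The cardinality of the `⟨P⟩`-orbit of `x`. -/
noncomputable def orbLen {X : Type*} (P : Equiv.Perm X) (x : X) : ℕ :=
  Set.ncard {y | ∃ m : ℤ, (P ^ m) x = y}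

/-- A complete map of order `n`. -/
def IsCompleteMap {n : ℕ} (P : Equiv.Perm (Quadricells n)) : Prop :=
  (∀ x : Quadricells n, ((P x : (Fin n × Fin n) × Bool)).1.1 = (x : (Fin n × Fin n) × Bool).1.1) ∧
  mapAlpha n * P * mapAlpha n = P⁻¹ ∧
  (∀ (x : Quadricells n) (m : ℤ), (P ^ m) x ≠ mapAlpha n x) ∧
  (∀ x : Quadricells n, orbLen P x = n - 1)

/-- A complete map is non-orientable when `⟨αβ, P⟩` is transitive on the quadricells. -/
def NonOrientable {n : ℕ} (P : Equiv.Perm (Quadricells n)) : Prop :=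
  ∀ x y : Quadricells n, ∃ σ ∈ Subgroup.closure {mapAlpha n * mapBeta n, P}, σ x = y

/-- `τ` is an automorphism of the map `P`. -/
def IsMapAut {n : ℕ} (P τ : Equiv.Perm (Quadricells n)) : Prop :=
  τ * mapAlpha n = mapAlpha n * τ ∧ τ * mapBeta n = mapBeta n * τ ∧ τ * P * τ⁻¹ = P

/-- Isomorphism of maps on the quadricells of `K_n`. -/
def MapIso {n : ℕ} (P Q : Equiv.Perm (Quadricells n)) : Prop :=
  ∃ τ : Equiv.Perm (Quadricells n),
    τ * mapAlpha n = mapAlpha n * τ ∧ τ * mapBeta n = mapBeta n * τ ∧ τ * P * τ⁻¹ = Q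

/-- The setoid of maps (restricted by a property `Q`) under map isomorphism. -/
def mapSetoid (n : ℕ) (Q : Equiv.Perm (Quadricells n) → Prop) :
    Setoid {P : Equiv.Perm (Quadricells n) // Q P} where
  r P₁ P₂ := MapIso P₁.val P₂.val
  iseqv := by
    constructor
    · intro P
      exact ⟨1, by simp, by simp, by simp⟩
    · rintro P Q ⟨τ, h1, h2, h3⟩
      refine ⟨τ⁻¹, (Commute.inv_left h1 : _), (Commute.inv_left h2 : _), ?_⟩
      rw [← h3]; group
    · rintro P Q R ⟨τ, h1, h2, h3⟩ ⟨σ, g1, g2, g3⟩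
      refine ⟨σ * τ, (Commute.mul_left g1 h1 : _), (Commute.mul_left g2 h2 : _), ?_⟩
      rw [← g3, ← h3]; group

section CMaux

variable {n : ℕ}

lemma CM_alpha_val (x : Quadricells n) :
    (mapAlpha n x).val = (x.val.1, !x.val.2) := rfl

lemma CM_beta_val (x : Quadricells n) :
    (mapBeta n x).val = ((x.val.1.2, x.val.1.1), x.val.2) := rfl

/-- The subgroup of permutations preserving the first vertex coordinate. -/
def CM_fcSub (n : ℕ) : Subgroup (Equiv.Perm (Quadricells n)) where
  carrier := {Q | ∀ x : Quadricells n, (Q x).val.1.1 = x.val.1.1}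
  one_mem' := fun _ => rfl
  mul_mem' := fun {a b} ha hb x => (ha (b x)).trans (hb x)
  inv_mem' := fun {a} ha x => by
    have h := ha (a⁻¹ x)
    rw [show a (a⁻¹ x) = x from a.apply_symm_apply x] at h
    exact h.symm

lemma CM_zpow_fst {P : Equiv.Perm (Quadricells n)}
    (hP1 : ∀ x : Quadricells n, (P x).val.1.1 = x.val.1.1) (m : ℤ) (x : Quadricells n) :
    ((P ^ m) x).val.1.1 = x.val.1.1 :=
  (Subgroup.zpow_mem (CM_fcSub n) (show P ∈ CM_fcSub n from hP1) m) x

/-- The automorphisms of `P` form a subgroup. -/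
def CM_autSub (n : ℕ) (P : Equiv.Perm (Quadricells n)) :
    Subgroup (Equiv.Perm (Quadricells n)) where
  carrier := {τ | IsMapAut P τ}
  one_mem' := ⟨by simp, by simp, by simp⟩
  mul_mem' := by
    rintro a b ⟨a1, a2, a3⟩ ⟨b1, b2, b3⟩
    refine ⟨(Commute.mul_left a1 b1 : _), (Commute.mul_left a2 b2 : _), ?_⟩
    calc a * b * P * (a * b)⁻¹ = a * (b * P * b⁻¹) * a⁻¹ := by group
    _ = P := by rw [b3]; exact a3
  inv_mem' := by
    rintro a ⟨a1, a2, a3⟩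
    refine ⟨(Commute.inv_left a1 : _), (Commute.inv_left a2 : _), ?_⟩
    conv_lhs => rw [← a3]
    group

/-- Within a `⟨P⟩`-orbit, every second coordinate different from the base vertex occurs. -/
lemma CM_orbit_snd_surj {P : Equiv.Perm (Quadricells n)} (hP : IsCompleteMap P)
    (x : Quadricells n) (j : Fin n) (hj : j ≠ x.val.1.1) :
    ∃ m : ℤ, ((P ^ m) x).val.1.2 = j := by
  classical
  obtain ⟨hfst, -, hfree, hlen⟩ := hP
  set S : Set (Quadricells n) := {y | ∃ m : ℤ, (P ^ m) x = y} with hSdef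
  have hmem : ∀ y ∈ S, y.val.1.1 = x.val.1.1 := by
    rintro y ⟨m, rfl⟩
    exact CM_zpow_fst hfst m x
  have hinj : Set.InjOn (fun y : Quadricells n => y.val.1.2) S := by
    rintro y₁ hy₁ y₂ hy₂ h
    obtain ⟨a, rfl⟩ := hy₁
    obtain ⟨b, rfl⟩ := hy₂
    by_contra hne
    have hfst2 : ((P ^ a) x).val.1 = ((P ^ b) x).val.1 := by
      refine Prod.ext ?_ h
      rw [hmem _ ⟨a, rfl⟩, hmem _ ⟨b, rfl⟩]
    have hbne : ((P ^ a) x).val.2 ≠ ((P ^ b) x).val.2 := by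
      intro hb
      exact hne (Subtype.ext (Prod.ext hfst2 hb))
    have hbool : ((P ^ a) x).val.2 = !((P ^ b) x).val.2 := by
      cases hb : ((P ^ b) x).val.2 <;> cases ha : ((P ^ a) x).val.2 <;> simp_all
    have halpha : (P ^ a) x = mapAlpha n ((P ^ b) x) :=
      Subtype.ext (Prod.ext hfst2 hbool)
    have : (P ^ (a - b)) ((P ^ b) x) = mapAlpha n ((P ^ b) x) := by
      rw [← Equiv.Perm.mul_apply, ← zpow_add, sub_add_cancel]
      exact halpha
    exact hfree _ _ this
  have hSn : S.ncard = n - 1 := hlen x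
  have hTn : Set.ncard {k : Fin n | k ≠ x.val.1.1} = n - 1 := by
    have he : {k : Fin n | k ≠ x.val.1.1} = (({x.val.1.1}ᶜ : Finset (Fin n)) : Set (Fin n)) := by
      ext k; simp
    rw [he, Set.ncard_coe_finset, Finset.card_compl, Finset.card_singleton, Fintype.card_fin]
  have himg : (fun y : Quadricells n => y.val.1.2) '' S = {k : Fin n | k ≠ x.val.1.1} := by
    apply Set.eq_of_subset_of_ncard_le
    · rintro k ⟨y, hy, rfl⟩
      intro hk
      exact y.2 ((hmem y hy).trans hk.symm)
    · rw [Set.ncard_image_of_injOn hinj, hSn, hTn]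
    · exact Set.toFinite _
  have hjm : j ∈ (fun y : Quadricells n => y.val.1.2) '' S := by
    rw [himg]; exact hj
  obtain ⟨y, ⟨m, rfl⟩, hm⟩ := hjm
  exact ⟨m, hm⟩

/-- An automorphism fixing a quadricell fixes every quadricell at the same vertex. -/
lemma CM_fix_vertex {P τ : Equiv.Perm (Quadricells n)} (hP : IsCompleteMap P)
    (hτ : IsMapAut P τ) {x : Quadricells n} (hx : τ x = x) :
    ∀ y : Quadricells n, y.val.1.1 = x.val.1.1 → τ y = y := by
  obtain ⟨hα, -, hconj⟩ := hτ
  have hcomm : Commute τ P := by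
    unfold Commute SemiconjBy
    conv_rhs => rw [← hconj]
    group
  intro y hy
  have hj : y.val.1.2 ≠ x.val.1.1 := fun h => y.2 (hy.trans h.symm)
  obtain ⟨m, hm⟩ := CM_orbit_snd_surj hP x y.val.1.2 hj
  set z := (P ^ m) x with hz
  have hfixz : τ z = z := by
    have h1 : τ * P ^ m = P ^ m * τ := hcomm.zpow_right m
    calc τ z = (τ * P ^ m) x := rfl
    _ = (P ^ m * τ) x := by rw [h1]
    _ = (P ^ m) x := by rw [Equiv.Perm.mul_apply, hx]
  have hzfst : z.val.1 = y.val.1 := by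
    refine Prod.ext ?_ hm
    rw [CM_zpow_fst hP.1 m x, hy]
  by_cases hb : z.val.2 = y.val.2
  · have : y = z := Subtype.ext (Prod.ext hzfst.symm hb.symm)
    rw [this]; exact hfixz
  · have hbool : y.val.2 = !z.val.2 := by
      cases h2 : z.val.2 <;> cases h1 : y.val.2 <;> simp_all
    have hya : y = mapAlpha n z := Subtype.ext (Prod.ext hzfst.symm hbool)
    have hca : τ (mapAlpha n z) = mapAlpha n (τ z) := by
      have := congrArg (fun f : Equiv.Perm (Quadricells n) => f z) hα
      simpa [Equiv.Perm.mul_apply] using this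
    rw [hya, hca, hfixz]

/-- An automorphism of a complete map with a fixed point is the identity. -/
lemma CM_fix_one {P τ : Equiv.Perm (Quadricells n)} (hP : IsCompleteMap P)
    (hτ : IsMapAut P τ) {x : Quadricells n} (hx : τ x = x) : τ = 1 := by
  apply Equiv.ext
  intro y
  rw [Equiv.Perm.one_apply]
  by_cases h : y.val.1.1 = x.val.1.1
  · exact CM_fix_vertex hP hτ hx y h
  · have hik : x.val.1.1 ≠ y.val.1.1 := fun h' => h h'.symm
    set c : Quadricells n := ⟨((x.val.1.1, y.val.1.1), true), hik⟩ with hc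
    have hfc : τ c = c := CM_fix_vertex hP hτ hx c rfl
    have hcb : τ (mapBeta n c) = mapBeta n (τ c) := by
      have := congrArg (fun f : Equiv.Perm (Quadricells n) => f c) hτ.2.1
      simpa [Equiv.Perm.mul_apply] using this
    have hfbc : τ (mapBeta n c) = mapBeta n c := by rw [hcb, hfc]
    exact CM_fix_vertex hP hτ hfbc y rfl

end CMaux

/-- Every automorphism of a complete map of order `n ≥ 3` fixing a quadricell is the
identity; consequently `Aut(P)` and each cyclic group `⟨τ⟩`, `τ ∈ Aut(P)`, act
semi-regularly on the quadricells. -/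
theorem complete_map_aut_semiregular (n : ℕ) (hn : 3 ≤ n)
    (P : Equiv.Perm (Quadricells n)) (hP : IsCompleteMap P) :
    (∀ τ : Equiv.Perm (Quadricells n), IsMapAut P τ → (∃ x, τ x = x) → τ = 1) ∧
    (∀ x : Quadricells n,
      Set.ncard {y | ∃ τ : Equiv.Perm (Quadricells n), IsMapAut P τ ∧ τ x = y} =
        Set.ncard {τ : Equiv.Perm (Quadricells n) | IsMapAut P τ}) ∧
    (∀ τ : Equiv.Perm (Quadricells n), IsMapAut P τ →
      ∀ x : Quadricells n, orbLen τ x = orderOf τ) := by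
  classical
  have key : ∀ τ : Equiv.Perm (Quadricells n), IsMapAut P τ → (∃ x, τ x = x) → τ = 1 := by
    rintro τ hτ ⟨x, hx⟩
    exact CM_fix_one hP hτ hx
  refine ⟨key, ?_, ?_⟩
  · -- orbit of Aut(P) has size |Aut(P)|
    intro x
    have himg : {y | ∃ τ : Equiv.Perm (Quadricells n), IsMapAut P τ ∧ τ x = y} =
        (fun τ : Equiv.Perm (Quadricells n) => τ x) '' {τ | IsMapAut P τ} := by
      ext y
      constructor
      · rintro ⟨τ, h1, h2⟩; exact ⟨τ, h1, h2⟩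
      · rintro ⟨τ, h1, h2⟩; exact ⟨τ, h1, h2⟩
    have hinj : Set.InjOn (fun τ : Equiv.Perm (Quadricells n) => τ x)
        {τ | IsMapAut P τ} := by
      intro a ha b hb hab
      have hmem : IsMapAut P (b⁻¹ * a) :=
        (CM_autSub n P).mul_mem ((CM_autSub n P).inv_mem hb) ha
      have hab' : a x = b x := hab
      have hfix : (b⁻¹ * a) x = x := by
        rw [Equiv.Perm.mul_apply, hab', show b⁻¹ (b x) = x from b.symm_apply_apply x]
      have h1 : b⁻¹ * a = 1 := key _ hmem ⟨x, hfix⟩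
      have := inv_mul_eq_one.mp h1
      exact this.symm
    rw [himg, Set.ncard_image_of_injOn hinj]
  · -- each ⟨τ⟩-orbit has size orderOf τ
    intro τ hτ x
    set d := orderOf τ with hd
    have hdpos : 0 < d := orderOf_pos τ
    have hdiv : ∀ m : ℤ, (τ ^ m) x = x → (d : ℤ) ∣ m := by
      intro m hm
      have hmem : IsMapAut P (τ ^ m) := Subgroup.zpow_mem (CM_autSub n P) hτ m
      have h1 : τ ^ m = 1 := key _ hmem ⟨x, hm⟩
      exact orderOf_dvd_iff_zpow_eq_one.mpr h1
    have horb : {y | ∃ m : ℤ, (τ ^ m) x = y} =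
        Set.range (fun k : Fin d => (τ ^ (k : ℕ)) x) := by
      ext y
      constructor
      · rintro ⟨m, rfl⟩
        have h0 : (0 : ℤ) ≤ m % d := Int.emod_nonneg m (by exact_mod_cast hdpos.ne')
        have hlt : m % d < d := Int.emod_lt_of_pos m (by exact_mod_cast hdpos)
        refine ⟨⟨(m % d).toNat, by omega⟩, ?_⟩
        show (τ ^ ((m % d).toNat)) x = (τ ^ m) x
        have hcast : (((m % d).toNat : ℤ)) = m % d := Int.toNat_of_nonneg h0
        have hone : τ ^ ((d : ℤ) * (m / d)) = 1 := by
          rw [zpow_mul, zpow_natCast, pow_orderOf_eq_one, one_zpow]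
        calc (τ ^ ((m % d).toNat)) x = (τ ^ (((m % d).toNat : ℤ))) x := by rw [zpow_natCast]
        _ = (τ ^ (m % d)) x := by rw [hcast]
        _ = (τ ^ (m % d) * τ ^ ((d : ℤ) * (m / d))) x := by
              rw [hone, mul_one]
        _ = (τ ^ m) x := by rw [← zpow_add, Int.emod_add_mul_ediv]
      · rintro ⟨k, rfl⟩
        exact ⟨(k : ℕ), by rw [zpow_natCast]⟩
    have hinjf : Function.Injective (fun k : Fin d => (τ ^ (k : ℕ)) x) := by
      intro a b hab
      have h1 : (τ ^ ((a : ℕ) : ℤ)) x = (τ ^ ((b : ℕ) : ℤ)) x := by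
        simpa [zpow_natCast] using hab
      have hfx : (τ ^ (((a : ℕ) : ℤ) - ((b : ℕ) : ℤ))) x = x := by
        apply (τ ^ ((b : ℕ) : ℤ)).injective
        rw [← Equiv.Perm.mul_apply, ← zpow_add]
        have he : ((b : ℕ) : ℤ) + (((a : ℕ) : ℤ) - ((b : ℕ) : ℤ)) = ((a : ℕ) : ℤ) := by ring
        rw [he]
        exact h1
      obtain ⟨c, hc⟩ := hdiv _ hfx
      have ha' : (a : ℕ) < d := a.isLt
      have hb' : (b : ℕ) < d := b.isLt
      have h1' : ((a : ℕ) : ℤ) < d := by exact_mod_cast ha'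
      have h2' : ((b : ℕ) : ℤ) < d := by exact_mod_cast hb'
      have hdz : (0 : ℤ) < d := by exact_mod_cast hdpos
      have hc0 : c = 0 := by
        rcases lt_trichotomy c 0 with h | h | h
        · exfalso
          have hcle : c ≤ -1 := by omega
          have hmul := mul_le_mul_of_nonneg_left hcle hdz.le
          rw [mul_neg_one] at hmul
          linarith [hc, h2', Int.natCast_nonneg (a : ℕ)]
        · exact h
        · exfalso
          have hcge : (1 : ℤ) ≤ c := h
          have hmul := mul_le_mul_of_nonneg_left hcge hdz.le
          rw [mul_one] at hmul
          linarith [hc, h1', Int.natCast_nonneg (b : ℕ)]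
      rw [hc0, mul_zero] at hc
      apply Fin.ext
      omega
    rw [orbLen, horb, ← Set.image_univ, Set.ncard_image_of_injOn hinjf.injOn,
      Set.ncard_univ, Nat.card_eq_fintype_card, Fintype.card_fin]
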